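/- Let D ⊂ ℂ^n be a bounded, strongly ℂ-linearly convex C^{1,1} domain with Δ(w,z) = ⟨∂ρ(w), w−z⟩. Then for w₁, w₂, z ∈ bD: |Δ(w₁,z) − Δ(w₂,z)| ≲ d(w₁,w₂)² + d(w₁,w₂)·d(w₁,z), where d(w,z) = |Δ(w,z)|^{1/2}. -/

import Mathlib

/-- The Leray pairing `Δ(w,z) = ⟨∂ρ(w), w−z⟩`. -/
noncomputable def cplxPair {n : ℕ}
    (pc : EuclideanSpace ℂ (Fin n) → EuclideanSpace ℂ (Fin n))
    (w z : EuclideanSpace ℂ (Fin n)) : ℂ :=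
  ∑ j, pc w j * (w j - z j)

/-- The quasi-distance `d(w,z) = |Δ(w,z)|^{1/2}`. -/
noncomputable def lerayDist {n : ℕ}
    (pc : EuclideanSpace ℂ (Fin n) → EuclideanSpace ℂ (Fin n))
    (w z : EuclideanSpace ℂ (Fin n)) : ℝ :=
  Real.sqrt ‖cplxPair pc w z‖

/-!
Subtracting `Δ(w₁,w₂)` from `Δ(w₁,z) − Δ(w₂,z)` leaves exactly `⟨∂ρ(w₁) − ∂ρ(w₂), w₂ − z⟩`,
which the Lipschitz bound on `∂ρ` controls by `|w₁ − w₂| (|w₁ − w₂| + |w₁ − z|)`.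
Strong ℂ-linear convexity, `c₀ |w − z|² ≤ |Δ(w,z)| = d(w,z)²`, turns both Euclidean
distances into quasi-distances.
-/

open Finset

theorem EuclideanSpace.norm_sum_mul_le {𝕜 ι : Type*} [RCLike 𝕜] [Fintype ι]
    (a b : EuclideanSpace 𝕜 ι) : ‖∑ j, a j * b j‖ ≤ ‖a‖ * ‖b‖ :=
  calc ‖∑ j, a j * b j‖ ≤ ∑ j, ‖a j‖ * ‖b j‖ := by
        simpa only [norm_mul] using norm_sum_le univ fun j => a j * b j
    _ ≤ √(∑ j, ‖a j‖ ^ 2) * √(∑ j, ‖b j‖ ^ 2) := Real.sum_mul_le_sqrt_mul_sqrt _ _ _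
    _ = ‖a‖ * ‖b‖ := by rw [EuclideanSpace.norm_eq, EuclideanSpace.norm_eq]

section LerayPairing

variable {n : ℕ}

theorem lerayDist_sq (pc : EuclideanSpace ℂ (Fin n) → EuclideanSpace ℂ (Fin n))
    (w z : EuclideanSpace ℂ (Fin n)) : lerayDist pc w z ^ 2 = ‖cplxPair pc w z‖ :=
  Real.sq_sqrt (norm_nonneg _)

theorem cplxPair_sub_cplxPair (pc : EuclideanSpace ℂ (Fin n) → EuclideanSpace ℂ (Fin n))
    (w₁ w₂ z : EuclideanSpace ℂ (Fin n)) :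
    cplxPair pc w₁ z - cplxPair pc w₂ z =
      cplxPair pc w₁ w₂ + ∑ j, (pc w₁ - pc w₂) j * (w₂ - z) j := by
  simp only [cplxPair, ← sum_sub_distrib, ← sum_add_distrib, PiLp.sub_apply]
  exact sum_congr rfl fun j _ => by ring

theorem norm_cplxPair_sub_cplxPair_le
    {pc : EuclideanSpace ℂ (Fin n) → EuclideanSpace ℂ (Fin n)} {K : NNReal}
    (hpc : LipschitzWith K pc)
    (w₁ w₂ z : EuclideanSpace ℂ (Fin n)) :
    ‖cplxPair pc w₁ z - cplxPair pc w₂ z‖ ≤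
      ‖cplxPair pc w₁ w₂‖ + K * ‖w₁ - w₂‖ * (‖w₁ - w₂‖ + ‖w₁ - z‖) := by
  have hw₂z : ‖w₂ - z‖ ≤ ‖w₁ - w₂‖ + ‖w₁ - z‖ := by
    rw [norm_sub_rev w₁ w₂]; exact norm_sub_le_norm_sub_add_norm_sub w₂ w₁ z
  rw [cplxPair_sub_cplxPair]
  calc _ ≤ ‖cplxPair pc w₁ w₂‖ + ‖∑ j, (pc w₁ - pc w₂) j * (w₂ - z) j‖ := norm_add_le _ _
    _ ≤ ‖cplxPair pc w₁ w₂‖ + ‖pc w₁ - pc w₂‖ * ‖w₂ - z‖ := by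
        gcongr; exact EuclideanSpace.norm_sum_mul_le _ _
    _ ≤ ‖cplxPair pc w₁ w₂‖ + K * ‖w₁ - w₂‖ * (‖w₁ - w₂‖ + ‖w₁ - z‖) := by
        gcongr; exact hpc.norm_sub_le w₁ w₂

end LerayPairing

theorem mul_mul_add_le_of_mul_sq_le {c K a b d e : ℝ} (hc : 0 < c) (hK : 0 ≤ K)
    (ha : 0 ≤ a) (hb : 0 ≤ b) (hd : 0 ≤ d) (he : 0 ≤ e)
    (had : c * a ^ 2 ≤ d ^ 2) (hbe : c * b ^ 2 ≤ e ^ 2) :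
    K * a * (a + b) ≤ K / c * (d ^ 2 + d * e) := by
  have hab : c * (a * b) ≤ d * e := by
    refine (pow_le_pow_iff_left₀ (by positivity) (by positivity) two_ne_zero).mp ?_
    calc (c * (a * b)) ^ 2 = (c * a ^ 2) * (c * b ^ 2) := by ring
      _ ≤ d ^ 2 * e ^ 2 := mul_le_mul had hbe (by positivity) (sq_nonneg d)
      _ = (d * e) ^ 2 := by ring
  rw [div_mul_eq_mul_div, le_div_iff₀ hc]
  nlinarith [mul_le_mul_of_nonneg_left (add_le_add had hab) hK]

theorem delta_difference_estimate_general (n : ℕ)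
    (ρ : EuclideanSpace ℂ (Fin n) → ℝ)
    (pc : EuclideanSpace ℂ (Fin n) → EuclideanSpace ℂ (Fin n))
    (Kpc : NNReal) (hpcLip : LipschitzWith Kpc pc)
    (c₀ : ℝ) (hc₀ : 0 < c₀)
    (hconv : ∀ z, ρ z ≤ 0 → ∀ w, ρ w = 0 →
      c₀ * ‖w - z‖ ^ 2 ≤ ‖cplxPair pc w z‖) :
    ∃ C : ℝ, 0 < C ∧ ∀ w₁ w₂ z, ρ w₁ = 0 → ρ w₂ = 0 → ρ z = 0 →
      ‖cplxPair pc w₁ z - cplxPair pc w₂ z‖ ≤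
        C * (lerayDist pc w₁ w₂ ^ 2 + lerayDist pc w₁ w₂ * lerayDist pc w₁ z) := by
  refine ⟨1 + Kpc / c₀, by positivity, fun w₁ w₂ z hw₁ hw₂ hz => ?_⟩
  have h₁₂ := hconv w₂ hw₂.le w₁ hw₁
  have h₁z := hconv z hz.le w₁ hw₁
  rw [← lerayDist_sq] at h₁₂ h₁z
  have hd : 0 ≤ lerayDist pc w₁ w₂ * lerayDist pc w₁ z :=
    mul_nonneg (Real.sqrt_nonneg _) (Real.sqrt_nonneg _)
  have hlip := mul_mul_add_le_of_mul_sq_le (d := lerayDist pc w₁ w₂) (e := lerayDist pc w₁ z)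
    hc₀ Kpc.coe_nonneg (norm_nonneg _) (norm_nonneg _) (Real.sqrt_nonneg _) (Real.sqrt_nonneg _)
    h₁₂ h₁z
  calc _ ≤ lerayDist pc w₁ w₂ ^ 2 + Kpc * ‖w₁ - w₂‖ * (‖w₁ - w₂‖ + ‖w₁ - z‖) := by
        rw [lerayDist_sq]; exact norm_cplxPair_sub_cplxPair_le hpcLip w₁ w₂ z
    _ ≤ _ := by rw [add_mul, one_mul]; linarith

/-- For a bounded, strongly ℂ-linearly convex `C^{1,1}` domain, for boundary points
`w₁, w₂, z`: `|Δ(w₁,z) − Δ(w₂,z)| ≲ d(w₁,w₂)² + d(w₁,w₂)·d(w₁,z)`. -/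
theorem delta_difference_estimate (n : ℕ) (hn : 2 ≤ n)
    (ρ : EuclideanSpace ℂ (Fin n) → ℝ)
    (D : Set (EuclideanSpace ℂ (Fin n)))
    (hD : D = {z | ρ z < 0}) (hbdd : Bornology.IsBounded D)
    (hρ1 : ContDiff ℝ 1 ρ)
    (pc : EuclideanSpace ℂ (Fin n) → EuclideanSpace ℂ (Fin n))
    (hpc : ∀ w v, fderiv ℝ ρ w v = 2 * (∑ j, pc w j * v j).re)
    (Kpc : NNReal) (hpcLip : LipschitzWith Kpc pc)
    (hgrad : ∀ w, ρ w = 0 → fderiv ℝ ρ w ≠ 0)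
    (c₀ : ℝ) (hc₀ : 0 < c₀)
    (hconv : ∀ z, ρ z ≤ 0 → ∀ w, ρ w = 0 →
      c₀ * ‖w - z‖ ^ 2 ≤ ‖cplxPair pc w z‖) :
    ∃ C : ℝ, 0 < C ∧ ∀ w₁ w₂ z, ρ w₁ = 0 → ρ w₂ = 0 → ρ z = 0 →
      ‖cplxPair pc w₁ z - cplxPair pc w₂ z‖ ≤
        C * (lerayDist pc w₁ w₂ ^ 2 + lerayDist pc w₁ w₂ * lerayDist pc w₁ z) :=
  delta_difference_estimate_general n ρ pc Kpc hpcLip c₀ hc₀ hconv
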